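/- arXiv:1308.6689 — 2 statements merged into one kernel-verified Lean document; each statement's English description precedes it below -/
import Mathlib

section
/- Let H be a non-empty graph such that the vertex of K_1 does not belong to any local metric basis for the join K_1 + H. Then for any connected graph G of order n, dim_l(G ⊙ H) = n · dim_l(K_1 + H). -/
open SimpleGraph

/-- A set `S` is a local metric generator for `G` if every pair of adjacent
vertices is distinguished (by distance) by some element of `S`. -/
def IsLocalMetricGenerator {α : Type*} (G : SimpleGraph α) (S : Set α) : Prop :=
  ∀ x y : α, G.Adj x y → ∃ v ∈ S, G.dist v x ≠ G.dist v y

/-- The local metric dimension of a graph. -/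
noncomputable def localMetricDim {α : Type*} (G : SimpleGraph α) : ℕ :=
  sInf {k | ∃ S : Finset α, S.card = k ∧ IsLocalMetricGenerator G ↑S}

/-- A local metric basis: a minimum-cardinality local metric generator. -/
def IsLocalMetricBasis {α : Type*} (G : SimpleGraph α) (S : Finset α) : Prop :=
  IsLocalMetricGenerator G ↑S ∧ S.card = localMetricDim G

/-- The corona product `G ⊙ H`. -/
def corona {α β : Type*} (G : SimpleGraph α) (H : SimpleGraph β) :
    SimpleGraph (α ⊕ α × β) :=
  SimpleGraph.fromRel (fun x y => match x, y with
    | Sum.inl a, Sum.inl a' => G.Adj a a'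
    | Sum.inl a, Sum.inr p => a = p.1
    | Sum.inr p, Sum.inl a => a = p.1
    | Sum.inr p, Sum.inr q => p.1 = q.1 ∧ H.Adj p.2 q.2)

/-- The join `K₁ + H`; the vertex of `K₁` is `none`. -/
def joinK1 {β : Type*} (H : SimpleGraph β) : SimpleGraph (Option β) :=
  SimpleGraph.fromRel (fun x y => match x, y with
    | none, some _ => True
    | some b, some b' => H.Adj b b'
    | _, _ => False)

/-- Eccentricity of a vertex (in `ℕ∞`). -/
noncomputable def ecc {α : Type*} (G : SimpleGraph α) (x : α) : ℕ∞ :=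
  ⨆ y, G.edist x y

/-- Radius of a graph (in `ℕ∞`). -/
noncomputable def gradius {α : Type*} (G : SimpleGraph α) : ℕ∞ :=
  ⨅ x, ecc G x

/-- Diameter of a graph (in `ℕ∞`). -/
noncomputable def gdiam {α : Type*} (G : SimpleGraph α) : ℕ∞ :=
  ⨆ x, ecc G x

/-!
The copy of `K₁ + H` at a vertex `a` of `G` sits isometrically in `G ⊙ H`, since all its
distances are at most two on both sides, and `inl a` separates the copy of `H` from the rest of
the graph, so every vertex outside it sees the whole copy of `H` at one and the same distance.
Hence a local metric generator of `G ⊙ H`, restricted to a copy and enlarged by its hub, is one of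
`K₁ + H`; as the hub lies in no basis, every copy contributes at least `dim_l (K₁ + H)` vertices.
Conversely, a basis of `K₁ + H` avoiding the hub, placed in every copy, resolves all edges: those
inside a copy through the isometry, and an edge `a a'` of `G` because `inl a` and `inl a'` lie at
distances one and two from the copy of `H` at `a`.
-/

namespace SimpleGraph

variable {V : Type*} {K : SimpleGraph V} {u v w c : V}

lemma Connected.dist_eq_ite_of_hub [DecidableEq V] [DecidableRel K.Adj] (hK : K.Connected)
    (hu : K.dist w u ≤ 1) (hv : K.dist w v ≤ 1) :
    K.dist u v = if u = v then 0 else if K.Adj u v then 1 else 2 := by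
  have hle : K.dist u v ≤ K.dist u w + K.dist w v := hK.dist_triangle
  rw [dist_comm (u := u) (v := w)] at hle
  split_ifs with heq hadj
  · exact heq ▸ dist_self
  · exact dist_eq_one_iff_adj.mpr hadj
  · have hpos := hK.pos_dist_of_ne heq
    have hne : K.dist u v ≠ 1 := mt dist_eq_one_iff_adj.mp hadj
    omega

lemma Connected.dist_eq_add_of_cut (hK : K.Connected) {S : Set V}
    (hcut : ∀ x ∈ S, ∀ y ∉ S, K.Adj x y → y = c) (hu : u ∈ S) (hw : w ∉ S) :
    K.dist u w = K.dist u c + K.dist c w := by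
  classical
  refine le_antisymm hK.dist_triangle ?_
  obtain ⟨p, hp⟩ := hK.exists_walk_length_eq_dist u w
  obtain ⟨d, hd, hdS, hdS'⟩ := p.exists_boundary_dart S hu hw
  have hc : c ∈ p.support :=
    hcut _ hdS _ hdS' d.adj ▸ p.dart_snd_mem_support_of_mem_darts hd
  rw [← hp, ← p.take_spec hc, Walk.length_append]
  exact add_le_add (dist_le _) (dist_le _)

end SimpleGraph

open Sum

section Join

variable {β : Type*} {H : SimpleGraph β}

lemma joinK1_adj_none_some (b : β) : (joinK1 H).Adj none (some b) := by
  simp [joinK1]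

lemma joinK1_adj_some_some {b b' : β} : (joinK1 H).Adj (some b) (some b') ↔ H.Adj b b' := by
  simp only [joinK1, fromRel_adj, ne_eq, Option.some.injEq]
  exact ⟨fun ⟨_, h⟩ => h.elim id (·.symm), fun h => ⟨h.ne, .inl h⟩⟩

lemma joinK1_dist_none_le_one (x : Option β) : (joinK1 H).dist none x ≤ 1 := by
  cases x with
  | none => simp
  | some b => exact (dist_eq_one_iff_adj.mpr (joinK1_adj_none_some b)).le

lemma joinK1_connected : (joinK1 H).Connected :=
  (connected_iff_exists_forall_reachable _).mpr
    ⟨none, fun x => x.casesOn (.refl _) fun b => (joinK1_adj_none_some b).reachable⟩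

end Join

section Corona

variable {α β : Type*} {G : SimpleGraph α} {H : SimpleGraph β}

/-- The copy of `K₁ + H` at the vertex `a` of `G` inside `G ⊙ H`. -/
def coronaCopy (a : α) : Option β → α ⊕ α × β
  | none => inl a
  | some b => inr (a, b)

lemma coronaCopy_injective (a : α) : Function.Injective (coronaCopy (β := β) a) := by
  rintro (_ | b) (_ | b') h <;> simp_all [coronaCopy]

lemma corona_adj_inl_inl {a a' : α} : (corona G H).Adj (inl a) (inl a') ↔ G.Adj a a' := by
  simp only [corona, fromRel_adj, ne_eq, inl.injEq]
  exact ⟨fun ⟨_, h⟩ => h.elim id (·.symm), fun h => ⟨h.ne, .inl h⟩⟩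

lemma corona_adj_inl_inr {a : α} {p : α × β} : (corona G H).Adj (inl a) (inr p) ↔ a = p.1 := by
  simp [corona]

lemma corona_adj_inr_inr {p q : α × β} :
    (corona G H).Adj (inr p) (inr q) ↔ p.1 = q.1 ∧ H.Adj p.2 q.2 := by
  simp only [corona, fromRel_adj, ne_eq, inr.injEq]
  refine ⟨fun ⟨_, h⟩ => h.elim id fun h => ⟨h.1.symm, h.2.symm⟩, fun h => ⟨?_, .inl h⟩⟩
  rintro rfl
  exact h.2.ne rfl

lemma corona_adj_coronaCopy {a : α} {x y : Option β} :
    (corona G H).Adj (coronaCopy a x) (coronaCopy a y) ↔ (joinK1 H).Adj x y := by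
  cases x <;> cases y
  · simp [coronaCopy]
  · simp [coronaCopy, corona_adj_inl_inr, joinK1_adj_none_some]
  · rw [adj_comm, adj_comm (joinK1 H)]
    simp [coronaCopy, corona_adj_inl_inr, joinK1_adj_none_some]
  · simp [coronaCopy, corona_adj_inr_inr, joinK1_adj_some_some]

lemma corona_adj_cases {x y : α ⊕ α × β} (h : (corona G H).Adj x y) :
    (∃ a a', x = inl a ∧ y = inl a' ∧ G.Adj a a') ∨
      ∃ a x' y', x = coronaCopy a x' ∧ y = coronaCopy a y' ∧ (joinK1 H).Adj x' y' := by
  rcases x with a | ⟨a, b⟩ <;> rcases y with a' | ⟨a', b'⟩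
  · exact .inl ⟨a, a', rfl, rfl, corona_adj_inl_inl.mp h⟩
  · obtain rfl : a = a' := corona_adj_inl_inr.mp h
    exact .inr ⟨a, none, some b', rfl, rfl, joinK1_adj_none_some b'⟩
  · obtain rfl : a' = a := corona_adj_inl_inr.mp h.symm
    exact .inr ⟨a', some b, none, rfl, rfl, (joinK1_adj_none_some b).symm⟩
  · obtain ⟨rfl, hb⟩ := corona_adj_inr_inr.mp h
    exact .inr ⟨a, some b, some b', rfl, rfl, joinK1_adj_some_some.mpr hb⟩

lemma corona_connected (hG : G.Connected) : (corona G H).Connected := by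
  obtain ⟨a₀⟩ := hG.nonempty
  have hinl (a : α) : (corona G H).Reachable (inl a₀) (inl a) :=
    (hG a₀ a).map ⟨inl, corona_adj_inl_inl.mpr⟩
  refine (connected_iff_exists_forall_reachable _).mpr ⟨inl a₀, ?_⟩
  rintro (a | p)
  · exact hinl a
  · exact (hinl p.1).trans (corona_adj_inl_inr.mpr rfl).reachable

lemma corona_dist_coronaCopy (hG : G.Connected) (a : α) (x y : Option β) :
    (corona G H).dist (coronaCopy a x) (coronaCopy a y) = (joinK1 H).dist x y := by
  classical
  have hub (z : Option β) : (corona G H).dist (inl a) (coronaCopy a z) ≤ 1 := by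
    cases z with
    | none => simp [coronaCopy]
    | some b =>
      exact (dist_eq_one_iff_adj.mpr (corona_adj_inl_inr (p := (a, b)).mpr rfl)).le
  rw [(corona_connected hG).dist_eq_ite_of_hub (hub x) (hub y),
    joinK1_connected.dist_eq_ite_of_hub (joinK1_dist_none_le_one x) (joinK1_dist_none_le_one y)]
  simp only [(coronaCopy_injective a).eq_iff, corona_adj_coronaCopy]

lemma corona_dist_inr_eq (hG : G.Connected) {a : α} {w : α ⊕ α × β}
    (hw : ∀ b, w ≠ inr (a, b)) (b : β) :
    (corona G H).dist (inr (a, b)) w = 1 + (corona G H).dist (inl a) w := by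
  have hcut : ∀ x ∈ Set.range (fun b => inr (a, b)), ∀ y ∉ Set.range (fun b => inr (a, b)),
      (corona G H).Adj x y → y = inl a := by
    rintro _ ⟨b, rfl⟩ (a' | ⟨a', b'⟩) hy h
    · rw [corona_adj_inl_inr.mp h.symm]
    · obtain ⟨rfl, -⟩ := corona_adj_inr_inr.mp h
      exact absurd ⟨b', rfl⟩ hy
  rw [(corona_connected hG).dist_eq_add_of_cut hcut ⟨b, rfl⟩ (by simpa [eq_comm] using hw),
    dist_eq_one_iff_adj.mpr (corona_adj_inl_inr.mpr rfl).symm]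

end Corona

section LocalMetricDim

variable {γ : Type*} {K : SimpleGraph γ}

lemma localMetricDim_le_card {S : Finset γ} (hS : IsLocalMetricGenerator K ↑S) :
    localMetricDim K ≤ S.card :=
  Nat.sInf_le ⟨S, rfl, hS⟩

lemma exists_isLocalMetricBasis [Fintype γ] (K : SimpleGraph γ) :
    ∃ S, IsLocalMetricBasis K S := by
  have huniv : IsLocalMetricGenerator K ↑(Finset.univ : Finset γ) := fun x y h =>
    ⟨x, by simp, by rw [dist_self, dist_eq_one_iff_adj.mpr h]; omega⟩
  obtain ⟨S, hcard, hS⟩ :=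
    Nat.sInf_mem (s := {k | ∃ S : Finset γ, S.card = k ∧ IsLocalMetricGenerator K ↑S})
    ⟨_, Finset.univ, rfl, huniv⟩
  exact ⟨S, hS, hcard⟩

lemma localMetricDim_lt_card_of_mem {v : γ} (hv : ∀ S, IsLocalMetricBasis K S → v ∉ S)
    {S : Finset γ} (hS : IsLocalMetricGenerator K ↑S) (hvS : v ∈ S) :
    localMetricDim K < S.card :=
  (localMetricDim_le_card hS).lt_of_ne fun h => hv S ⟨hS, h.symm⟩ hvS

end LocalMetricDim

section CoronaLocalMetricDim

variable {α β : Type*} {G : SimpleGraph α} {H : SimpleGraph β}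

lemma isLocalMetricGenerator_corona [Nonempty β] (hG : G.Connected) {T : Set β}
    (hT : IsLocalMetricGenerator (joinK1 H) (some '' T)) :
    IsLocalMetricGenerator (corona G H) (inr '' (Set.univ ×ˢ T)) := by
  have hmem (a : α) {c : β} (hc : c ∈ T) :
      (inr (a, c) : α ⊕ α × β) ∈ inr '' (Set.univ ×ˢ T) :=
    ⟨(a, c), ⟨trivial, hc⟩, rfl⟩
  intro x y hxy
  rcases corona_adj_cases hxy with ⟨a, a', rfl, rfl, h⟩ | ⟨a, x, y, rfl, rfl, h⟩
  · obtain ⟨b⟩ := ‹Nonempty β›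
    obtain ⟨_, ⟨c, hc, rfl⟩, -⟩ := hT _ _ (joinK1_adj_none_some b)
    refine ⟨inr (a, c), hmem a hc, ?_⟩
    rw [corona_dist_inr_eq hG (by simp) c, corona_dist_inr_eq hG (by simp) c, dist_self,
      dist_eq_one_iff_adj.mpr (corona_adj_inl_inl.mpr h)]
    omega
  · obtain ⟨_, ⟨c, hc, rfl⟩, hd⟩ := hT x y h
    refine ⟨coronaCopy a (some c), hmem a hc, ?_⟩
    rwa [corona_dist_coronaCopy hG, corona_dist_coronaCopy hG]

lemma isLocalMetricGenerator_joinK1_of_corona (hG : G.Connected) {S : Set (α ⊕ α × β)}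
    (hS : IsLocalMetricGenerator (corona G H) S) (a : α) :
    IsLocalMetricGenerator (joinK1 H) (insert none (some '' {c | inr (a, c) ∈ S})) := by
  rintro (_ | b) (_ | b') h
  · exact absurd rfl h.ne
  · exact ⟨none, .inl rfl, by rw [dist_self, dist_eq_one_iff_adj.mpr h]; omega⟩
  · exact ⟨none, .inl rfl, by rw [dist_self, dist_eq_one_iff_adj.mpr h.symm]; omega⟩
  obtain ⟨s, hs, hd⟩ := hS (inr (a, b)) (inr (a, b'))
    (corona_adj_inr_inr.mpr ⟨rfl, joinK1_adj_some_some.mp h⟩)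
  by_cases hsa : ∃ c, s = inr (a, c)
  · obtain ⟨c, rfl⟩ := hsa
    refine ⟨some c, .inr ⟨c, hs, rfl⟩, ?_⟩
    rwa [← corona_dist_coronaCopy hG a (some c) (some b),
      ← corona_dist_coronaCopy hG a (some c) (some b')]
  · simp only [not_exists] at hsa
    rw [dist_comm (u := s) (v := inr (a, b)), dist_comm (u := s) (v := inr (a, b')),
      corona_dist_inr_eq hG hsa, corona_dist_inr_eq hG hsa] at hd
    exact absurd rfl hd

lemma card_mul_localMetricDim_le [Fintype α] (hG : G.Connected)
    (hv : ∀ S : Finset (Option β), IsLocalMetricBasis (joinK1 H) S → none ∉ S)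
    {S : Finset (α ⊕ α × β)} (hS : IsLocalMetricGenerator (corona G H) ↑S) :
    Fintype.card α * localMetricDim (joinK1 H) ≤ S.card := by
  classical
  let fiber (a : α) : Finset (α × β) := S.toRight.filter (·.1 = a)
  have hfiber (a : α) : localMetricDim (joinK1 H) ≤ (fiber a).card := by
    have hgen : IsLocalMetricGenerator (joinK1 H)
        ↑(insert none ((fiber a).image (some ∘ Prod.snd))) := by
      convert isLocalMetricGenerator_joinK1_of_corona hG hS a using 1
      ext (_ | c) <;> simp [fiber]
    have hlt := localMetricDim_lt_card_of_mem hv hgen (Finset.mem_insert_self _ _)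
    have hcard := (Finset.card_insert_le none ((fiber a).image (some ∘ Prod.snd))).trans
      (Nat.add_le_add_right Finset.card_image_le 1)
    omega
  calc Fintype.card α * localMetricDim (joinK1 H)
      = ∑ _a : α, localMetricDim (joinK1 H) := by simp
    _ ≤ ∑ a : α, (fiber a).card := Finset.sum_le_sum fun a _ => hfiber a
    _ = S.toRight.card := (Finset.card_eq_sum_card_fiberwise fun _ _ => Finset.mem_univ _).symm
    _ ≤ S.card := Finset.card_toRight_le

lemma localMetricDim_corona_le [Fintype α] [Nonempty β] (hG : G.Connected) {T : Finset β}
    (hT : IsLocalMetricGenerator (joinK1 H) (some '' ↑T)) :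
    localMetricDim (corona G H) ≤ Fintype.card α * T.card := by
  classical
  simpa using localMetricDim_le_card (S := (Finset.univ ×ˢ T).map .inr)
    (by simpa using isLocalMetricGenerator_corona hG hT)

end CoronaLocalMetricDim

/-- If `H` is non-empty and the vertex of `K₁` is in no local metric basis of
`K₁ + H`, then `dim_l (G ⊙ H) = n ⬝ dim_l (K₁ + H)` for connected `G` of order `n`. -/
theorem stmt4 {α β : Type*} [Fintype α] [Fintype β] (G : SimpleGraph α) (H : SimpleGraph β)
    (hG : G.Connected) (hH : ∃ x y, H.Adj x y)
    (hv : ∀ S : Finset (Option β), IsLocalMetricBasis (joinK1 H) S → none ∉ S) :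
    localMetricDim (corona G H) = Fintype.card α * localMetricDim (joinK1 H) := by
  obtain ⟨B, hBgen, hBcard⟩ := exists_isLocalMetricBasis (joinK1 H)
  have hnone : none ∉ B := hv B ⟨hBgen, hBcard⟩
  have hB : some '' ↑B.eraseNone = (↑B : Set (Option β)) := by
    ext (_ | b) <;> simp [hnone]
  obtain ⟨b, -, -⟩ := hH
  have : Nonempty β := ⟨b⟩
  obtain ⟨S, hS, hScard⟩ := exists_isLocalMetricBasis (corona G H)
  refine le_antisymm ?_ (hScard ▸ card_mul_localMetricDim_le hG hv hS)
  calc localMetricDim (corona G H) ≤ Fintype.card α * B.eraseNone.card :=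
        localMetricDim_corona_le hG (hB ▸ hBgen)
    _ = Fintype.card α * localMetricDim (joinK1 H) := by
        rw [Finset.card_eraseNone_of_not_mem hnone, hBcard]
end

section
/- For any non-empty graph H of order n′ and any connected graph G of order n ≥ 2, n ≤ dim_l(G ⊙ H) ≤ n(n′ − 1). -/
open SimpleGraph

/-!
In `G ⊙ H` the copy of `H` over `a` is attached to the rest of the graph only through `a`, so
every vertex outside that copy sees all of its vertices at the same distance. Hence a local
metric generator must contain a vertex of every copy (to resolve an edge of it), which gives
`n ≤ dim_l (G ⊙ H)`. Conversely, removing one fixed vertex `b₀` from every copy leaves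
`n (n' - 1)` vertices resolving every edge: an edge with an endpoint in the set is resolved by
that endpoint, an edge `a a'` of `G` by a vertex over `a`, and the spoke from `a` to `(a, b₀)`
by a vertex in a copy over some `a' ≠ a`, which is one step closer to `a` than to `(a, b₀)`.
-/

namespace SimpleGraph

variable {V W : Type*} {G : SimpleGraph V} {u v : V}

lemma Reachable.dist_map_le {G' : SimpleGraph W} (f : G →g G') (h : G.Reachable u v) :
    G'.dist (f u) (f v) ≤ G.dist u v := by
  obtain ⟨p, hp⟩ := h.exists_walk_length_eq_dist
  simpa [hp] using G'.dist_le (p.map f)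

lemma Adj.dist_left_ne (h : G.Adj u v) : G.dist u u ≠ G.dist u v := by
  rw [dist_self, dist_eq_one_iff_adj.mpr h]
  exact zero_ne_one

lemma Walk.le_add_length (f : V → ℕ) (hf : ∀ x y, G.Adj x y → f y ≤ f x + 1)
    (p : G.Walk u v) : f v ≤ f u + p.length := by
  induction p with
  | nil => simp
  | cons hxy _ ih =>
    have := hf _ _ hxy
    rw [Walk.length_cons]
    omega

lemma Reachable.le_add_dist (f : V → ℕ) (hf : ∀ x y, G.Adj x y → f y ≤ f x + 1)
    (h : G.Reachable u v) : f v ≤ f u + G.dist u v := by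
  obtain ⟨p, hp⟩ := h.exists_walk_length_eq_dist
  exact hp ▸ p.le_add_length f hf

end SimpleGraph

lemma isLocalMetricGenerator_univ {α : Type*} (G : SimpleGraph α) :
    IsLocalMetricGenerator G Set.univ := fun x _ h =>
  ⟨x, trivial, h.dist_left_ne⟩

lemma localMetricDim_le {α : Type*} {G : SimpleGraph α} {S : Finset α}
    (hS : IsLocalMetricGenerator G S) : localMetricDim G ≤ S.card :=
  Nat.sInf_le ⟨S, rfl, hS⟩

lemma le_localMetricDim {α : Type*} [Fintype α] {G : SimpleGraph α} {k : ℕ}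
    (h : ∀ S : Finset α, IsLocalMetricGenerator G S → k ≤ S.card) : k ≤ localMetricDim G :=
  le_csInf ⟨_, Finset.univ, rfl, by simpa using isLocalMetricGenerator_univ G⟩
    (by rintro _ ⟨S, rfl, hS⟩; exact h S hS)

namespace Corona

open Sum

variable {α β : Type*} {G : SimpleGraph α} {H : SimpleGraph β}

@[simp]
lemma adj_inl_inl {a a' : α} : (corona G H).Adj (inl a) (inl a') ↔ G.Adj a a' := by
  simp only [corona, fromRel_adj, ne_eq, inl.injEq]
  exact ⟨fun ⟨_, h⟩ => h.elim id .symm, fun h => ⟨h.ne, .inl h⟩⟩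

@[simp]
lemma adj_inl_inr {a : α} {p : α × β} : (corona G H).Adj (inl a) (inr p) ↔ a = p.1 := by
  simp [corona, fromRel_adj]

@[simp]
lemma adj_inr_inl {a : α} {p : α × β} : (corona G H).Adj (inr p) (inl a) ↔ a = p.1 := by
  rw [adj_comm, adj_inl_inr]

@[simp]
lemma adj_inr_inr {p q : α × β} :
    (corona G H).Adj (inr p) (inr q) ↔ p.1 = q.1 ∧ H.Adj p.2 q.2 := by
  simp only [corona, fromRel_adj, ne_eq, inr.injEq]
  refine ⟨fun ⟨_, h⟩ => h.elim id fun ⟨h₁, h₂⟩ => ⟨h₁.symm, h₂.symm⟩, fun h => ⟨?_, .inl h⟩⟩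
  rintro rfl
  exact H.irrefl h.2

def inlHom (G : SimpleGraph α) (H : SimpleGraph β) : G →g corona G H :=
  ⟨inl, adj_inl_inl.mpr⟩

open Classical in
/-- Grows by at most one along each edge of `G ⊙ H` and vanishes on the copy of `H` over `a`,
so it bounds distances from that copy from below. -/
noncomputable def potential (G : SimpleGraph α) (β : Type*) (a : α) : α ⊕ α × β → ℕ
  | inl x => G.dist a x + 1
  | inr p => if p.1 = a then 0 else G.dist a p.1 + 2

lemma potential_le_add_one (a : α) :
    ∀ u v, (corona G H).Adj u v → potential G β a v ≤ potential G β a u + 1 := by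
  rintro (x | ⟨x, b⟩) (y | ⟨y, c⟩) h <;> simp only [adj_inl_inl, adj_inl_inr, adj_inr_inl,
    adj_inr_inr] at h
  · have := h.reachable.dist_triangle_right a
    simp only [potential, dist_eq_one_iff_adj.mpr h] at this ⊢
    omega
  · subst h
    simp only [potential]
    split <;> omega
  · subst h
    simp only [potential]
    split
    · simp_all
    · omega
  · obtain ⟨rfl, -⟩ := h
    simp [potential]

variable (H) in
lemma reachable_inr_inl (hG : G.Connected) (a a' : α) (b : β) :
    (corona G H).Reachable (inr (a, b)) (inl a') :=
  (adj_inr_inl.mpr rfl).reachable.trans ((hG a a').map (inlHom G H))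

lemma dist_inr_inl (hG : G.Connected) (a a' : α) (b : β) :
    (corona G H).dist (inr (a, b)) (inl a') = G.dist a a' + 1 := by
  apply le_antisymm
  · have hab : (corona G H).Adj (inr (a, b)) (inl a) := adj_inr_inl.mpr rfl
    calc (corona G H).dist (inr (a, b)) (inl a')
        ≤ (corona G H).dist (inr (a, b)) (inl a) + (corona G H).dist (inl a) (inl a') :=
          hab.reachable.dist_triangle_left _
      _ ≤ 1 + G.dist a a' := by
          rw [dist_eq_one_iff_adj.mpr hab]
          exact Nat.add_le_add_left ((hG a a').dist_map_le (inlHom G H)) 1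
      _ = G.dist a a' + 1 := add_comm _ _
  · simpa [potential] using
      (reachable_inr_inl H hG a a' b).le_add_dist _ (potential_le_add_one a)

lemma dist_inr_inr (hG : G.Connected) {a a' : α} (ha : a ≠ a') (b b' : β) :
    (corona G H).dist (inr (a, b)) (inr (a', b')) = G.dist a a' + 2 := by
  have hab : (corona G H).Adj (inl a') (inr (a', b')) := adj_inl_inr.mpr rfl
  apply le_antisymm
  · have := hab.reachable.dist_triangle_right (inr (a, b))
    rwa [dist_inr_inl hG, dist_eq_one_iff_adj.mpr hab] at this
  · simpa [potential, ha.symm] using ((reachable_inr_inl H hG a a' b).trans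
      hab.reachable).le_add_dist _ (potential_le_add_one a)

lemma dist_inr_eq_of_forall_ne (hG : G.Connected) {a : α} {v : α ⊕ α × β}
    (hv : ∀ b, v ≠ inr (a, b)) (b b' : β) :
    (corona G H).dist v (inr (a, b)) = (corona G H).dist v (inr (a, b')) := by
  rcases v with a' | ⟨a', c⟩
  · simp only [dist_comm (u := inl a'), dist_inr_inl hG]
  · have ha : a' ≠ a := by rintro rfl; exact hv c rfl
    rw [dist_inr_inr hG ha, dist_inr_inr hG ha]

lemma exists_inr_mem_of_isLocalMetricGenerator (hG : G.Connected) {b b' : β} (hb : H.Adj b b')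
    {S : Set (α ⊕ α × β)} (hS : IsLocalMetricGenerator (corona G H) S) (a : α) :
    ∃ c, inr (a, c) ∈ S := by
  by_contra! hS'
  obtain ⟨v, hvS, hv⟩ := hS (inr (a, b)) (inr (a, b')) (adj_inr_inr.mpr ⟨rfl, hb⟩)
  exact hv (dist_inr_eq_of_forall_ne hG (fun c hc => hS' c (hc ▸ hvS)) b b')

lemma isLocalMetricGenerator_of_forall_inr_mem [Nontrivial α] (hG : G.Connected) {b₀ b₁ : β}
    (hb : b₁ ≠ b₀) {S : Set (α ⊕ α × β)} (hS : ∀ a b, b ≠ b₀ → inr (a, b) ∈ S) :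
    IsLocalMetricGenerator (corona G H) S := by
  have spoke (a : α) (b : β) :
      ∃ w ∈ S, (corona G H).dist w (inl a) ≠ (corona G H).dist w (inr (a, b)) := by
    by_cases hb' : b = b₀
    · obtain ⟨a', ha'⟩ := exists_ne a
      refine ⟨inr (a', b₁), hS a' b₁ hb, ?_⟩
      rw [dist_inr_inl hG, dist_inr_inr hG ha']
      omega
    · exact ⟨inr (a, b), hS a b hb', (adj_inr_inl.mpr rfl).dist_left_ne.symm⟩
  rintro (a | ⟨a, b⟩) (a' | ⟨a', b'⟩) h
  · refine ⟨inr (a, b₁), hS a b₁ hb, ?_⟩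
    rw [dist_inr_inl hG, dist_inr_inl hG, dist_self]
    have := hG.pos_dist_of_ne (adj_inl_inl.mp h).ne
    omega
  · obtain rfl := adj_inl_inr.mp h
    exact spoke a b'
  · obtain rfl := adj_inr_inl.mp h
    obtain ⟨w, hw, hne⟩ := spoke a' b
    exact ⟨w, hw, hne.symm⟩
  · obtain ⟨rfl, hbb'⟩ := adj_inr_inr.mp h
    by_cases hb' : b = b₀
    · exact ⟨_, hS a b' (hb' ▸ hbb'.ne'), h.symm.dist_left_ne.symm⟩
    · exact ⟨_, hS a b hb', h.dist_left_ne⟩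

end Corona

open Corona Finset in
/-- For non-empty `H` of order `n'` and connected `G` of order `n ≥ 2`,
`n ≤ dim_l (G ⊙ H) ≤ n (n' - 1)`. -/
theorem stmt16 {α β : Type*} [Fintype α] [Fintype β] (G : SimpleGraph α) (H : SimpleGraph β)
    (hG : G.Connected) (hn : 2 ≤ Fintype.card α) (hH : ∃ x y, H.Adj x y) :
    Fintype.card α ≤ localMetricDim (corona G H) ∧
    localMetricDim (corona G H) ≤ Fintype.card α * (Fintype.card β - 1) := by
  classical
  obtain ⟨b₀, b₁, hb⟩ := hH
  have : Nontrivial α := Fintype.one_lt_card_iff_nontrivial.mp hn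
  refine ⟨le_localMetricDim fun S hS => ?_, ?_⟩
  · refine card_le_card_of_surjOn (Sum.elim id Prod.fst) fun a _ => ?_
    obtain ⟨c, hc⟩ := exists_inr_mem_of_isLocalMetricGenerator hG hb hS a
    exact ⟨_, hc, rfl⟩
  · let S : Finset (α ⊕ α × β) := (univ ×ˢ {b₀}ᶜ).image Sum.inr
    calc localMetricDim (corona G H) ≤ #S :=
          localMetricDim_le (isLocalMetricGenerator_of_forall_inr_mem hG hb.ne' (by simp [S]))
      _ = Fintype.card α * (Fintype.card β - 1) := by
          simp [S, card_image_of_injective _ Sum.inr_injective, card_compl]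
end
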